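/- arXiv:2509.13354 — 7 statements merged into one kernel-verified Lean document; each statement's English description precedes it below -/
import Mathlib

section
/- Let f : ℕ → ℕ be a generalized factorial. Then the sequence h defined by h(n) = f(n)/n! consists of positive integers, satisfies h(0) = 1, and for every n ∈ ℕ and every 0 ≤ k ≤ n, the product h(k)·h(n−k) divides h(n)·C(n,k), where C(n,k) is the binomial coefficient. -/
/-- A function `f : ℕ → ℕ` is a generalized factorial if `f 0 = 1`, `f n ≥ 1` for all `n`,
`f k * f (n - k)` divides `f n` for all `0 ≤ k ≤ n`, and `n !` divides `f n` for all `n`. -/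
def IsGenFactorial (f : ℕ → ℕ) : Prop :=
  f 0 = 1 ∧ (∀ n, 1 ≤ f n) ∧ (∀ n k, k ≤ n → f k * f (n - k) ∣ f n) ∧
    (∀ n, Nat.factorial n ∣ f n)

theorem stmt_0 (f : ℕ → ℕ) (hf : IsGenFactorial f) :
    f 0 / Nat.factorial 0 = 1 ∧
    (∀ n, 1 ≤ f n / Nat.factorial n) ∧
    (∀ n k, k ≤ n →
      (f k / Nat.factorial k) * (f (n - k) / Nat.factorial (n - k)) ∣
        (f n / Nat.factorial n) * Nat.choose n k) := by
  obtain ⟨h0, hpos, hdvd, hfac⟩ := hf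
  refine ⟨by simp [h0], fun n => ?_, fun n k hk => ?_⟩
  · exact Nat.one_le_div_iff (Nat.factorial_pos n) |>.mpr
      (Nat.le_of_dvd (hpos n) (hfac n))
  · have e1 : f k / Nat.factorial k * Nat.factorial k = f k :=
      Nat.div_mul_cancel (hfac k)
    have e2 : f (n-k) / Nat.factorial (n-k) * Nat.factorial (n-k) = f (n-k) :=
      Nat.div_mul_cancel (hfac (n-k))
    have e3 : f n / Nat.factorial n * Nat.factorial n = f n :=
      Nat.div_mul_cancel (hfac n)
    rw [← Nat.mul_dvd_mul_iff_right
      (Nat.mul_pos (Nat.factorial_pos k) (Nat.factorial_pos (n-k)))]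
    have key := hdvd n k hk
    calc f k / Nat.factorial k * (f (n-k) / Nat.factorial (n-k)) *
          (Nat.factorial k * Nat.factorial (n-k))
        = f k * f (n-k) := by rw [mul_mul_mul_comm, e1, e2]
      _ ∣ f n := key
      _ = f n / Nat.factorial n * Nat.choose n k *
          (Nat.factorial k * Nat.factorial (n-k)) := by
          rw [mul_assoc, show Nat.choose n k * (Nat.factorial k * Nat.factorial (n-k))
            = Nat.factorial n from by
              rw [← Nat.choose_mul_factorial_mul_factorial hk]; ring, e3]
end

section
/- Let x : ℕ → ℕ be superadditive with x(n) ≥ 1 for all n ≥ 1, let y : ℕ → ℕ satisfy y(n) ≥ 1 for all n ≥ 1, and let (B_n)_{n≥0} be the factorial set associated with (x, y). Then for all n ≥ 0 and m ≥ 0, B_n divides B_{n+m}. -/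
/-! Superadditivity of a function `ℕ → ℕ` makes it monotone on `n ≥ 1`, so passing from `B_n` to
`B_{n+m}` only raises the exponents `x(⌊n/k⌋)` for `k ≤ n` and adds the factors with `n < k`. -/

theorem Nat.monotoneOn_Ici_one_of_superadditive {M : Type*} [AddCommMonoid M] [PartialOrder M]
    [CanonicallyOrderedAdd M] {x : ℕ → M}
    (hsuper : ∀ m n, 1 ≤ m → 1 ≤ n → x m + x n ≤ x (m + n)) :
    MonotoneOn x (Set.Ici 1) := by
  intro a (ha : 1 ≤ a) b _ hab
  obtain rfl | hlt := hab.eq_or_lt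
  · exact le_rfl
  calc x a ≤ x a + x (b - a) := le_self_add
    _ ≤ x (a + (b - a)) := hsuper a (b - a) ha (by omega)
    _ = x b := by rw [Nat.add_sub_cancel' hab]

def factorialSet {M : Type*} [CommMonoid M] (x : ℕ → ℕ) (y : ℕ → M) (n : ℕ) : M :=
  ∏ k ∈ Finset.Icc 1 n, y k ^ x (n / k)

theorem factorialSet_dvd_factorialSet {M : Type*} [CommMonoid M] {x : ℕ → ℕ} (y : ℕ → M)
    (hx : MonotoneOn x (Set.Ici 1)) {n N : ℕ} (hnN : n ≤ N) :
    factorialSet x y n ∣ factorialSet x y N := by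
  unfold factorialSet
  calc ∏ k ∈ Finset.Icc 1 n, y k ^ x (n / k)
      ∣ ∏ k ∈ Finset.Icc 1 n, y k ^ x (N / k) := by
        refine Finset.prod_dvd_prod_of_dvd _ _ fun k hk => pow_dvd_pow _ ?_
        obtain ⟨hk1, hkn⟩ := Finset.mem_Icc.mp hk
        have hnk : 1 ≤ n / k := (Nat.one_le_div_iff hk1).mpr hkn
        exact hx hnk (hnk.trans (Nat.div_le_div_right hnN)) (Nat.div_le_div_right hnN)
    _ ∣ ∏ k ∈ Finset.Icc 1 N, y k ^ x (N / k) :=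
        Finset.prod_dvd_prod_of_subset _ _ _ (Finset.Icc_subset_Icc_right hnN)

theorem stmt_3_general (x y : ℕ → ℕ)
    (hsuper : ∀ m n, 1 ≤ m → 1 ≤ n → x m + x n ≤ x (m + n))
    (B : ℕ → ℕ) (hB : ∀ n, B n = ∏ k ∈ Finset.Icc 1 n, y k ^ x (n / k)) :
    ∀ n m : ℕ, B n ∣ B (n + m) := by
  have hB' : B = factorialSet x y := funext hB
  intro n m
  rw [hB']
  exact factorialSet_dvd_factorialSet y (Nat.monotoneOn_Ici_one_of_superadditive hsuper)
    (Nat.le_add_right n m)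

theorem stmt_3 (x y : ℕ → ℕ)
    (hsuper : ∀ m n, 1 ≤ m → 1 ≤ n → x m + x n ≤ x (m + n))
    (hx : ∀ n, 1 ≤ n → 1 ≤ x n) (hy : ∀ n, 1 ≤ n → 1 ≤ y n)
    (B : ℕ → ℕ) (hB : ∀ n, B n = ∏ k ∈ Finset.Icc 1 n, y k ^ x (n / k)) :
    ∀ n m : ℕ, B n ∣ B (n + m) :=
  stmt_3_general x y hsuper B hB
end

section
/- Let x : ℕ → ℕ be superadditive with x(n) ≥ 1 for all n ≥ 1, let y : ℕ → ℕ satisfy y(n) ≥ 1 for all n ≥ 1, and let (B_n)_{n≥0} be the factorial set associated with (x, y). Then for all n ≥ 0 and all 0 ≤ k ≤ n, the product B_k·B_{n−k} divides B_n. -/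
/-!
Redefine `x 0 := 0`; the result `x₀ = update x 0 0` stays superadditive, hence monotone. Padding with
factors `y j ^ x₀ 0 = 1`, each of `B k`, `B (n - k)`, `B n` becomes a product over `j ∈ [1, n]`,
and the exponents compare factorwise:
`x₀ (k / j) + x₀ ((n - k) / j) ≤ x₀ (k / j + (n - k) / j) ≤ x₀ (n / j)`.
-/

open Finset Function

theorem monotone_of_superadditive {M : Type*} [AddCommMonoid M] [PartialOrder M]
    [CanonicallyOrderedAdd M] {f : ℕ → M} (hf : ∀ m n, f m + f n ≤ f (m + n)) : Monotone f :=
  monotone_nat_of_le_succ fun n => le_self_add.trans (hf n 1)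

theorem superadditive_update_zero {x : ℕ → ℕ}
    (hsuper : ∀ m n, 1 ≤ m → 1 ≤ n → x m + x n ≤ x (m + n)) (m n : ℕ) :
    update x 0 0 m + update x 0 0 n ≤ update x 0 0 (m + n) := by
  rcases Nat.eq_zero_or_pos m with rfl | hm
  · simp
  rcases Nat.eq_zero_or_pos n with rfl | hn
  · simp
  simp only [update_of_ne hm.ne', update_of_ne hn.ne', update_of_ne (by omega : m + n ≠ 0)]
  exact hsuper m n hm hn

theorem prod_Icc_pow_div_eq_prod_Icc_pow_update {M : Type*} [CommMonoid M] (x : ℕ → ℕ)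
    (y : ℕ → M) {m n : ℕ} (hmn : m ≤ n) :
    ∏ j ∈ Icc 1 m, y j ^ x (m / j) = ∏ j ∈ Icc 1 n, y j ^ update x 0 0 (m / j) := by
  refine prod_subset_one_on_sdiff (Icc_subset_Icc_right hmn) ?_ ?_
  · intro j hj
    simp only [mem_sdiff, mem_Icc] at hj
    rw [Nat.div_eq_of_lt (by omega), update_self, pow_zero]
  · intro j hj
    obtain ⟨hj1, hjm⟩ := mem_Icc.mp hj
    rw [update_of_ne (Nat.div_pos hjm hj1).ne']

theorem prod_pow_mul_prod_pow_dvd {ι M : Type*} [CommMonoid M] (s : Finset ι) (y : ι → M)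
    {a b c : ι → ℕ} (h : ∀ j ∈ s, a j + b j ≤ c j) :
    (∏ j ∈ s, y j ^ a j) * ∏ j ∈ s, y j ^ b j ∣ ∏ j ∈ s, y j ^ c j := by
  rw [← prod_mul_distrib]
  exact prod_dvd_prod_of_dvd _ _ fun j hj => pow_add (y j) _ _ ▸ pow_dvd_pow _ (h j hj)

theorem stmt_4_general (x y : ℕ → ℕ)
    (hsuper : ∀ m n, 1 ≤ m → 1 ≤ n → x m + x n ≤ x (m + n))
    (B : ℕ → ℕ) (hB : ∀ n, B n = ∏ k ∈ Finset.Icc 1 n, y k ^ x (n / k)) :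
    ∀ n k : ℕ, k ≤ n → B k * B (n - k) ∣ B n := by
  intro n k hkn
  have hsuper₀ := superadditive_update_zero hsuper
  have hmono₀ := monotone_of_superadditive hsuper₀
  rw [hB, hB, hB, prod_Icc_pow_div_eq_prod_Icc_pow_update x y hkn,
    prod_Icc_pow_div_eq_prod_Icc_pow_update x y (Nat.sub_le n k),
    prod_Icc_pow_div_eq_prod_Icc_pow_update x y le_rfl]
  refine prod_pow_mul_prod_pow_dvd _ y fun j _ => (hsuper₀ _ _).trans (hmono₀ ?_)
  calc k / j + (n - k) / j ≤ (k + (n - k)) / j := Nat.div_add_div_le_add_div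
    _ = n / j := by rw [Nat.add_sub_cancel' hkn]

theorem stmt_4 (x y : ℕ → ℕ)
    (hsuper : ∀ m n, 1 ≤ m → 1 ≤ n → x m + x n ≤ x (m + n))
    (hx : ∀ n, 1 ≤ n → 1 ≤ x n) (hy : ∀ n, 1 ≤ n → 1 ≤ y n)
    (B : ℕ → ℕ) (hB : ∀ n, B n = ∏ k ∈ Finset.Icc 1 n, y k ^ x (n / k)) :
    ∀ n k : ℕ, k ≤ n → B k * B (n - k) ∣ B n :=
  stmt_4_general x y hsuper B hB
end

section
/- Fix an integer q ≥ 1. For every prime p and every n ≥ 1, the p-adic valuation of the product ∏ gcd(j_1, j_2, …, j_q), taken over all q-tuples (j_1, …, j_q) with 1 ≤ j_i ≤ n for each i, equals ∑_{i=1}^{n} ⌊n/p^i⌋^q. -/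
/-!
For `m ∈ [1, n]` the valuation `v_p(m)` counts the `i ∈ [1, n]` with `p ^ i ∣ m`, and
`p ^ i ∣ gcd(j)` exactly when `p ^ i` divides every `j_k`. Summing over all tuples and swapping
the two sums, the `i`-th term counts the tuples with every entry a multiple of `p ^ i`, of which
there are `⌊n / p ^ i⌋ ^ q`.
-/

open Finset

namespace Nat

theorem card_filter_Icc_one_dvd (d n : ℕ) : #{x ∈ Icc 1 n | d ∣ x} = n / d := by
  rw [show Icc 1 n = Ioc 0 n from Icc_add_one_left_eq_Ioc 0 n]
  exact Ioc_filter_dvd_card_eq_div n d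

theorem factorization_eq_card_Icc_pow_dvd {p m n : ℕ} (hp : p.Prime) (hm : m ∈ Icc 1 n) :
    m.factorization p = #{i ∈ Icc 1 n | p ^ i ∣ m} := by
  rw [mem_Icc] at hm
  rw [factorization_eq_card_pow_dvd m hp,
    Ico_filter_pow_dvd_eq hp (by omega) (hm.2.trans (Nat.lt_pow_self hp.one_lt).le)]

end Nat

theorem Fintype.card_filter_piFinset_const_forall {ι α : Type*} [Fintype ι] [DecidableEq ι]
    (s : Finset α) (P : α → Prop) [DecidablePred P]
    [DecidablePred fun f : ι → α => ∀ i, P (f i)] :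
    #{f ∈ piFinset fun _ : ι => s | ∀ i, P (f i)} = #{x ∈ s | P x} ^ Fintype.card ι := by
  have : {f ∈ piFinset fun _ : ι => s | ∀ i, P (f i)} = piFinset fun _ => {x ∈ s | P x} := by
    ext f
    simp only [mem_filter, mem_piFinset, forall_and]
  rw [this, card_piFinset, prod_const, card_univ]

theorem Finset.gcd_mem_Icc_of_mem_piFinset {ι : Type*} [Fintype ι] [DecidableEq ι] [Nonempty ι]
    {n : ℕ} {j : ι → ℕ} (hj : j ∈ Fintype.piFinset fun _ => Icc 1 n) :
    univ.gcd j ∈ Icc 1 n := by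
  obtain ⟨k⟩ := ‹Nonempty ι›
  have hjk := mem_Icc.mp (Fintype.mem_piFinset.mp hj k)
  have hle : univ.gcd j ≤ j k := Nat.le_of_dvd (by omega) (gcd_dvd (mem_univ k))
  have hpos : univ.gcd j ≠ 0 := mt (fun h => gcd_eq_zero_iff.mp h k (mem_univ k)) (by omega)
  exact mem_Icc.mpr ⟨Nat.one_le_iff_ne_zero.mpr hpos, hle.trans hjk.2⟩

theorem stmt_9_general (q : ℕ) (hq : 1 ≤ q) (p : ℕ) (hp : p.Prime) (n : ℕ) :
    (∏ j ∈ Fintype.piFinset (fun _ : Fin q => Finset.Icc 1 n),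
        Finset.gcd Finset.univ j).factorization p =
      ∑ i ∈ Finset.Icc 1 n, (n / p ^ i) ^ q := by
  have : Nonempty (Fin q) := ⟨⟨0, hq⟩⟩
  set T := Fintype.piFinset fun _ : Fin q => Icc 1 n
  have hgcd : ∀ j ∈ T, univ.gcd j ∈ Icc 1 n := fun j hj => gcd_mem_Icc_of_mem_piFinset hj
  have hne : ∀ j ∈ T, univ.gcd j ≠ 0 := fun j hj =>
    Nat.one_le_iff_ne_zero.mp (mem_Icc.mp (hgcd j hj)).1
  calc (∏ j ∈ T, univ.gcd j).factorization p
      = ∑ j ∈ T, #{i ∈ Icc 1 n | p ^ i ∣ univ.gcd j} := by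
        rw [Nat.factorization_prod hne, Finsupp.finsetSum_apply]
        exact sum_congr rfl fun j hj => Nat.factorization_eq_card_Icc_pow_dvd hp (hgcd j hj)
    _ = ∑ i ∈ Icc 1 n, #{j ∈ T | ∀ k, p ^ i ∣ j k} := by
        simp only [Finset.dvd_gcd_iff, mem_univ, true_imp_iff]
        exact sum_card_bipartiteAbove_eq_sum_card_bipartiteBelow _
    _ = ∑ i ∈ Icc 1 n, (n / p ^ i) ^ q := by
        refine sum_congr rfl fun i _ => ?_
        rw [Fintype.card_filter_piFinset_const_forall, Nat.card_filter_Icc_one_dvd,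
          Fintype.card_fin]

theorem stmt_9 (q : ℕ) (hq : 1 ≤ q) (p : ℕ) (hp : p.Prime) (n : ℕ) (hn : 1 ≤ n) :
    (∏ j ∈ Fintype.piFinset (fun _ : Fin q => Finset.Icc 1 n),
        Finset.gcd Finset.univ j).factorization p =
      ∑ i ∈ Finset.Icc 1 n, (n / p ^ i) ^ q :=
  stmt_9_general q hq p hp n
end

section
/- Let x : ℕ → ℕ be superadditive with x(n) ≥ 1 for all n ≥ 1, and define B_0 = 1 and B_n = ∏_{p prime, p ≤ n} p^{∑_{i ≥ 1, p^i ≤ n} x(⌊n/p^i⌋)} for n ≥ 1. Then both real numbers ∑_{n=0}^{∞} 1/B_n and ∑_{n=0}^{∞} (−1)^n/B_n are irrational. -/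
/-!
With `x 0` reset to `0`, superadditivity and `x ≥ 1` make `x` strictly increasing, and then
`⌊(n + 1) / p^i⌋ = ⌊n / p^i⌋ + [p^i ∣ n + 1]` shows that the exponent `e_p(n)` of `p` in `B_n`
satisfies `e_p(n + 1) ≥ e_p(n) + v_p(n + 1)`; that is, `(n + 1) B_n ∣ B_(n + 1)`, exactly as for
`n!`. Fourier's proof that `e` is irrational then goes through: if `∑ ±1 / B_n = a / d`, then for
`N = 2d` the number `d B_N ∑_(n > N) ±1 / B_n` is an integer. It is nonzero because the terms of
the tail decrease at least geometrically with ratio `1/3`, so the first term dominates, and it has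
absolute value at most `(3/2) d B_N / B_(N + 1) ≤ 3d / (2(2d + 1)) < 1`.
-/

open Finset Filter

section LegendreProduct

variable (x : ℕ → ℕ)

def legendreExponent (p n : ℕ) : ℕ :=
  ∑ i ∈ (Icc 1 n).filter (fun i => p ^ i ≤ n), x (n / p ^ i)

def legendreProduct (n : ℕ) : ℕ :=
  ∏ p ∈ (Icc 1 n).filter Nat.Prime, p ^ legendreExponent x p n

variable {x}

theorem strictMono_update_zero_of_superadditive
    (hsuper : ∀ m n, 1 ≤ m → 1 ≤ n → x m + x n ≤ x (m + n)) (hx : ∀ n, 1 ≤ n → 1 ≤ x n) :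
    StrictMono (Function.update x 0 0) := by
  refine strictMono_nat_of_lt_succ fun m => ?_
  rcases Nat.eq_zero_or_pos m with rfl | hm
  · simpa [Nat.pos_iff_ne_zero, ← Nat.one_le_iff_ne_zero] using hx 1 le_rfl
  · simp only [Function.update_of_ne hm.ne', Function.update_of_ne (Nat.succ_ne_zero m)]
    linarith [hsuper m 1 hm le_rfl, hx 1 le_rfl]

theorem StrictMono.add_ite_dvd_le_div_succ {y : ℕ → ℕ} (hy : StrictMono y) (n d : ℕ) :
    y (n / d) + (if d ∣ n + 1 then 1 else 0) ≤ y ((n + 1) / d) := by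
  rw [Nat.succ_div]
  split_ifs
  · exact hy (Nat.lt_succ_self _)
  · simp

theorem update_zero_div_pow {p : ℕ} (hp : 1 < p) (n i : ℕ) :
    Function.update x 0 0 (n / p ^ i) = if p ^ i ≤ n then x (n / p ^ i) else 0 := by
  split_ifs with h
  · exact Function.update_of_ne (Nat.div_pos h (pow_pos (by omega) i)).ne' _ _
  · rw [Nat.div_eq_of_lt (not_le.mp h), Function.update_self]

theorem legendreExponent_eq_sum_Icc {p : ℕ} (hp : 1 < p) {n K : ℕ} (hnK : n ≤ K) :
    legendreExponent x p n = ∑ i ∈ Icc 1 K, Function.update x 0 0 (n / p ^ i) := by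
  simp only [legendreExponent, sum_filter, update_zero_div_pow hp]
  refine sum_subset (Icc_subset_Icc_right hnK) fun i hiK hin => if_neg ?_
  have : i < p ^ i := Nat.lt_pow_self hp
  simp only [mem_Icc] at hiK hin
  omega

theorem factorization_add_legendreExponent_le (hmono : StrictMono (Function.update x 0 0))
    {p : ℕ} (hp : p.Prime) (n : ℕ) :
    (n + 1).factorization p + legendreExponent x p n ≤ legendreExponent x p (n + 1) := by
  have hlt : n + 1 < p ^ (n + 1 + 1) := (n + 1).lt_succ_self.trans (Nat.lt_pow_self hp.one_lt)
  rw [Nat.factorization_eq_card_pow_dvd_of_lt hp n.succ_pos hlt, Ico_add_one_right_eq_Icc,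
    card_filter, legendreExponent_eq_sum_Icc hp.one_lt n.le_succ,
    legendreExponent_eq_sum_Icc hp.one_lt le_rfl, ← sum_add_distrib]
  exact sum_le_sum fun i _ => by linarith [hmono.add_ite_dvd_le_div_succ n (p ^ i)]

theorem legendreExponent_eq_zero_of_lt {p n : ℕ} (hpn : n < p) : legendreExponent x p n = 0 :=
  sum_eq_zero fun i hi => by
    simp only [mem_filter, mem_Icc] at hi
    have := Nat.le_self_pow (by omega : i ≠ 0) p
    omega

theorem legendreProduct_eq_prod_Icc {n K : ℕ} (hnK : n ≤ K) :
    legendreProduct x n = ∏ p ∈ (Icc 1 K).filter Nat.Prime, p ^ legendreExponent x p n := by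
  refine prod_subset (filter_subset_filter _ (Icc_subset_Icc_right hnK)) fun p hpK hpn => ?_
  simp only [mem_filter, mem_Icc] at hpK hpn
  have hnp : n < p := by
    by_contra h
    exact hpn ⟨⟨hpK.1.1, by omega⟩, hpK.2⟩
  rw [legendreExponent_eq_zero_of_lt hnp, pow_zero]

theorem prod_filter_prime_pow_factorization {n K : ℕ} (hn : n ≠ 0) (hnK : n ≤ K) :
    ∏ p ∈ (Icc 1 K).filter Nat.Prime, p ^ n.factorization p = n := by
  refine (prod_subset (fun p hp => ?_) fun p _ hp => ?_).symm.trans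
    (Nat.prod_primeFactors_pow_factorization hn).symm
  · have hp := Nat.mem_primeFactors.mp hp
    simp only [mem_filter, mem_Icc]
    exact ⟨⟨hp.1.one_lt.le, (Nat.le_of_dvd (Nat.pos_of_ne_zero hn) hp.2.1).trans hnK⟩, hp.1⟩
  · rw [← Nat.support_factorization, Finsupp.notMem_support_iff] at hp
    rw [hp, pow_zero]

theorem succ_mul_legendreProduct_dvd (hmono : StrictMono (Function.update x 0 0)) (n : ℕ) :
    (n + 1) * legendreProduct x n ∣ legendreProduct x (n + 1) := by
  conv_lhs => rw [← prod_filter_prime_pow_factorization n.add_one_ne_zero le_rfl,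
    legendreProduct_eq_prod_Icc n.le_succ, ← prod_mul_distrib]
  exact prod_dvd_prod_of_dvd _ _ fun p hp => (pow_add p _ _).symm ▸
    Nat.pow_dvd_pow p (factorization_add_legendreExponent_le hmono (mem_filter.mp hp).2 n)

theorem legendreProduct_pos (n : ℕ) : 0 < legendreProduct x n :=
  prod_pos fun _ hp => pow_pos (mem_filter.mp hp).2.pos _

end LegendreProduct

theorem abs_le_abs_mul_pow_of_abs_succ_le {g : ℕ → ℝ} {r : ℝ}
    (hg : ∀ k, |g (k + 1)| ≤ r * |g k|) (hr : 0 ≤ r) (k : ℕ) : |g k| ≤ |g 0| * r ^ k := by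
  induction k with
  | zero => simp
  | succ k ih => calc
      |g (k + 1)| ≤ r * |g k| := hg k
      _ ≤ r * (|g 0| * r ^ k) := by gcongr
      _ = |g 0| * r ^ (k + 1) := by ring

theorem abs_tsum_sub_le_of_abs_succ_le {g : ℕ → ℝ} {r : ℝ}
    (hg : ∀ k, |g (k + 1)| ≤ r * |g k|) (hr₀ : 0 ≤ r) (hr₁ : r < 1) :
    |∑' k, g k - g 0| ≤ r / (1 - r) * |g 0| := by
  have hsum : Summable g := summable_of_ratio_norm_eventually_le hr₁ (Eventually.of_forall hg)
  rw [hsum.tsum_eq_zero_add, add_sub_cancel_left]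
  have hbound : ∀ k, ‖g (k + 1)‖ ≤ |g 0| * r * r ^ k := fun k => by
    simpa [pow_succ, mul_assoc, mul_comm r] using abs_le_abs_mul_pow_of_abs_succ_le hg hr₀ (k + 1)
  calc |∑' k, g (k + 1)| ≤ |g 0| * r * (1 - r)⁻¹ :=
        tsum_of_norm_bounded ((hasSum_geometric_of_lt_one hr₀ hr₁).mul_left _) hbound
    _ = r / (1 - r) * |g 0| := by ring

theorem dvd_of_le_of_succ_mul_dvd {B : ℕ → ℕ} (hdvd : ∀ n, (n + 1) * B n ∣ B (n + 1))
    {m n : ℕ} (hmn : m ≤ n) : B m ∣ B n := by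
  induction n, hmn using Nat.le_induction with
  | base => rfl
  | succ n _ ih => exact ih.trans ((Dvd.intro_left _ rfl).trans (hdvd n))

theorem exists_intCast_eq_mul_sum_div {b : ℕ → ℕ} {M : ℕ} (s : ℕ → ℤ) (S : Finset ℕ)
    (hdvd : ∀ n ∈ S, b n ∣ M) : ∃ z : ℤ, (z : ℝ) = M * ∑ n ∈ S, (s n : ℝ) / b n := by
  refine ⟨∑ n ∈ S, s n * (M / b n : ℕ), ?_⟩
  simp only [Int.cast_sum, Int.cast_mul, Int.cast_natCast, mul_sum]
  refine sum_congr rfl fun n hn => ?_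
  rw [Nat.cast_div_charZero (hdvd n hn)]
  ring

section SignedReciprocals

variable {B : ℕ → ℕ} {s : ℕ → ℤ}

theorem abs_intCast_div_eq (hs : ∀ n, |s n| = 1) (n : ℕ) : |(s n : ℝ) / B n| = 1 / B n := by
  simp only [abs_div, ← Int.cast_abs, hs, Nat.abs_cast, Int.cast_one]

theorem abs_intCast_div_succ_le (hpos : ∀ n, 0 < B n) (hle : ∀ n, (n + 1) * B n ≤ B (n + 1))
    (hs : ∀ n, |s n| = 1) {n : ℕ} {r : ℝ} (hr : 1 ≤ r * (n + 1)) :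
    |(s (n + 1) : ℝ) / B (n + 1)| ≤ r * |(s n : ℝ) / B n| := by
  have hBn : (0 : ℝ) < B n := by exact_mod_cast hpos n
  have hB : ((n + 1 : ℕ) : ℝ) * B n ≤ B (n + 1) := by exact_mod_cast hle n
  push_cast at hB
  rw [abs_intCast_div_eq hs, abs_intCast_div_eq hs]
  calc 1 / (B (n + 1) : ℝ) ≤ 1 / ((n + 1) * B n) := one_div_le_one_div_of_le (by positivity) hB
    _ ≤ r * (1 / B n) := by
      rw [div_le_iff₀ (by positivity), show r * (1 / B n) * ((n + 1) * B n) = r * (n + 1) by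
        field_simp]
      exact hr

theorem summable_intCast_div (hpos : ∀ n, 0 < B n) (hle : ∀ n, (n + 1) * B n ≤ B (n + 1))
    (hs : ∀ n, |s n| = 1) : Summable fun n => (s n : ℝ) / B n :=
  summable_of_ratio_norm_eventually_le (r := 1 / 2) (by norm_num) <|
    eventually_atTop.2 ⟨1, fun n hn => abs_intCast_div_succ_le hpos hle hs <| by
      have : (1 : ℝ) ≤ n := by exact_mod_cast hn
      linarith⟩

theorem abs_tsum_add_sub_le (hpos : ∀ n, 0 < B n) (hle : ∀ n, (n + 1) * B n ≤ B (n + 1))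
    (hs : ∀ n, |s n| = 1) {m : ℕ} (hm : 2 ≤ m) :
    |∑' k, (s (k + m) : ℝ) / B (k + m) - s m / B m| ≤ |(s m : ℝ) / B m| / 2 := by
  have hratio : ∀ k,
      |(s (k + 1 + m) : ℝ) / B (k + 1 + m)| ≤ 1 / 3 * |(s (k + m) : ℝ) / B (k + m)| := fun k => by
    rw [add_right_comm]
    refine abs_intCast_div_succ_le hpos hle hs ?_
    have : (2 : ℝ) ≤ (k + m : ℕ) := by exact_mod_cast hm.trans (Nat.le_add_left m k)
    push_cast at this ⊢
    linarith
  have := abs_tsum_sub_le_of_abs_succ_le (g := fun k => (s (k + m) : ℝ) / B (k + m)) hratio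
    (by norm_num) (by norm_num)
  norm_num at this ⊢
  linarith

theorem exists_intCast_eq_den_mul_tsum_add (hpos : ∀ n, 0 < B n)
    (hdvd : ∀ n, (n + 1) * B n ∣ B (n + 1)) (hs : ∀ n, |s n| = 1) {q : ℚ}
    (hq : (q : ℝ) = ∑' n, (s n : ℝ) / B n) (N : ℕ) :
    ∃ z : ℤ, (z : ℝ) = q.den * B N * ∑' k, (s (k + (N + 1)) : ℝ) / B (k + (N + 1)) := by
  have hle : ∀ n, (n + 1) * B n ≤ B (n + 1) := fun n => Nat.le_of_dvd (hpos _) (hdvd n)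
  obtain ⟨z₀, hz₀⟩ := exists_intCast_eq_mul_sum_div (b := B) (M := B N) s (range (N + 1))
    fun n hn => dvd_of_le_of_succ_mul_dvd hdvd (Nat.lt_succ_iff.mp (mem_range.mp hn))
  have hsplit := (summable_intCast_div hpos hle hs).sum_add_tsum_nat_add (N + 1)
  have hnum : (q.num : ℝ) = q * q.den := by exact_mod_cast (Rat.mul_den_eq_num q).symm
  refine ⟨q.num * B N - q.den * z₀, ?_⟩
  push_cast
  rw [hnum, hz₀, hq, ← hsplit]
  ring

end SignedReciprocals

theorem irrational_tsum_div_of_succ_mul_dvd {B : ℕ → ℕ} (hpos : ∀ n, 0 < B n)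
    (hdvd : ∀ n, (n + 1) * B n ∣ B (n + 1)) {s : ℕ → ℤ} (hs : ∀ n, |s n| = 1) :
    Irrational (∑' n, (s n : ℝ) / B n) := by
  have hle : ∀ n, (n + 1) * B n ≤ B (n + 1) := fun n => Nat.le_of_dvd (hpos _) (hdvd n)
  set f : ℕ → ℝ := fun n => (s n : ℝ) / B n
  rintro ⟨q, hq⟩
  set N := 2 * q.den
  set T := ∑' k, f (k + (N + 1))
  have htail : |T - f (N + 1)| ≤ |f (N + 1)| / 2 :=
    abs_tsum_add_sub_le hpos hle hs (by have := q.pos; omega)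
  have hfN : 0 < |f (N + 1)| := by
    rw [abs_intCast_div_eq hs]; exact one_div_pos.2 (by exact_mod_cast hpos _)
  have hT0 : T ≠ 0 := fun h => by rw [h, zero_sub, abs_neg] at htail; linarith
  have hTle : |T| ≤ 3 / 2 * (1 / B (N + 1)) := by
    rw [← abs_intCast_div_eq hs]; linarith [abs_sub_abs_le_abs_sub T (f (N + 1))]
  obtain ⟨z, hz⟩ := exists_intCast_eq_den_mul_tsum_add hpos hdvd hs hq N
  have hdenBN : (0 : ℝ) < q.den * B N :=
    mul_pos (by exact_mod_cast q.pos) (by exact_mod_cast hpos N)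
  have hBN1 : ((2 * q.den + 1 : ℕ) : ℝ) * B N ≤ B (N + 1) := by exact_mod_cast hle N
  push_cast at hBN1
  have hz_ne : z ≠ 0 := fun h =>
    mul_ne_zero hdenBN.ne' hT0 (by rw [← hz, h, Int.cast_zero])
  have hz_lt : |(z : ℝ)| < 1 := calc
    _ = q.den * B N * |T| := by rw [hz, abs_mul, abs_of_pos hdenBN]
    _ ≤ q.den * B N * (3 / 2 * (1 / B (N + 1))) := by gcongr
    _ = 3 * (q.den * B N) / (2 * B (N + 1)) := by ring
    _ < 1 := by
      rw [div_lt_one (mul_pos two_pos (by exact_mod_cast hpos _))]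
      nlinarith
  have hz_ge : (1 : ℝ) ≤ |(z : ℝ)| := by exact_mod_cast Int.one_le_abs hz_ne
  linarith

theorem stmt_12 (x : ℕ → ℕ)
    (hsuper : ∀ m n, 1 ≤ m → 1 ≤ n → x m + x n ≤ x (m + n))
    (hx : ∀ n, 1 ≤ n → 1 ≤ x n)
    (B : ℕ → ℕ)
    (hB0 : B 0 = 1)
    (hB : ∀ n, 1 ≤ n → B n =
      ∏ p ∈ (Finset.Icc 1 n).filter Nat.Prime,
        p ^ (∑ i ∈ (Finset.Icc 1 n).filter (fun i => p ^ i ≤ n), x (n / p ^ i))) :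
    Irrational (∑' n : ℕ, (1 : ℝ) / B n) ∧
      Irrational (∑' n : ℕ, (-1 : ℝ) ^ n / B n) := by
  obtain rfl : B = legendreProduct x := funext fun n => by
    rcases Nat.eq_zero_or_pos n with rfl | hn
    · exact hB0
    · exact hB n hn
  have hirr (s : ℕ → ℤ) (hs : ∀ n, |s n| = 1) :=
    irrational_tsum_div_of_succ_mul_dvd legendreProduct_pos
      (succ_mul_legendreProduct_dvd (strictMono_update_zero_of_superadditive hsuper hx)) hs
  exact ⟨by simpa using hirr 1 fun _ => abs_one, by simpa using hirr ((-1) ^ ·) fun n => by simp⟩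
end

section
/- Let α, β, x, y : ℕ → ℕ with β(n) ≥ 1 and y(n) ≥ 1 for all n ≥ 1, and adopt the convention α(0) = x(0) = 0. Then ∏_{k=1}^{n} β(k)^{α(⌊n/k⌋)} = ∏_{k=1}^{n} y(k)^{x(⌊n/k⌋)} holds for every n ≥ 1 if and only if for every n ≥ 1 one has ∑_{d ∣ n} (α(n/d) − α(n/d − 1))·log β(d) = ∑_{d ∣ n} (x(n/d) − x(n/d − 1))·log y(d), where the differences are taken in ℤ and the sums are over the positive divisors d of n. (In other words, (α,β) and (x,y) generate the same factorials if and only if Δα ⋆ Log(β) = Δx ⋆ Log(y), where ⋆ is Dirichlet convolution, Δα(n) = α(n) − α(n−1), and Log(β)(n) = log β(n).) -/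
/-!
Taking logarithms turns the factorial `∏ k ≤ n, β k ^ α (n / k)` into
`L n = ∑ k ≤ n, α (n / k) * log (β k)`. Since `⌊n / k⌋` exceeds `⌊(n - 1) / k⌋` by one exactly
when `k ∣ n` (and is unchanged otherwise), `L n - L (n - 1) = (Δα ⋆ Log β) n`. Two sequences
vanishing at `0` agree iff their successive differences agree.
-/

open Finset

theorem forall_pos_eq_iff_forall_pos_sub_pred_eq {M : Type*} [AddCommGroup M] {F G : ℕ → M}
    (h0 : F 0 = G 0) :
    (∀ n, 1 ≤ n → F n = G n) ↔ ∀ n, 1 ≤ n → F n - F (n - 1) = G n - G (n - 1) := by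
  have hvalues : (∀ n, 1 ≤ n → F n = G n) ↔ ∀ n, F n = G n :=
    ⟨fun h n => n.eq_zero_or_pos.elim (fun hn => hn ▸ h0) (h n), fun h n _ => h n⟩
  have hdiffs : (∀ n, 1 ≤ n → F n - F (n - 1) = G n - G (n - 1)) ↔
      ∀ n, F (n + 1) - F n = G (n + 1) - G n :=
    ⟨fun h n => by simpa using h (n + 1) (by omega), fun h n hn => by
      obtain ⟨m, rfl⟩ := Nat.exists_eq_add_of_le' hn
      simpa using h m⟩
  rw [hvalues, hdiffs]
  refine ⟨fun h n => by rw [h, h], fun h n => ?_⟩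
  calc F n = F 0 + ∑ i ∈ range n, (F (i + 1) - F i) := by rw [sum_range_sub]; abel
    _ = G 0 + ∑ i ∈ range n, (G (i + 1) - G i) := by simp only [h, h0]
    _ = G n := by rw [sum_range_sub]; abel

theorem sum_Icc_div_mul_succ_sub {R : Type*} [CommRing R] (f g : ℕ → R) (hf : f 0 = 0) (m : ℕ) :
    ∑ k ∈ Icc 1 (m + 1), f ((m + 1) / k) * g k - ∑ k ∈ Icc 1 m, f (m / k) * g k =
      ∑ d ∈ (m + 1).divisors, (f ((m + 1) / d) - f ((m + 1) / d - 1)) * g d := by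
  have hdivisors : (m + 1).divisors = {d ∈ Icc 1 (m + 1) | d ∣ m + 1} := by
    rw [Nat.divisors, Ico_add_one_right_eq_Icc]
  have htop : ∑ k ∈ Icc 1 m, f (m / k) * g k = ∑ k ∈ Icc 1 (m + 1), f (m / k) * g k := by
    rw [sum_Icc_succ_top (by omega), Nat.div_eq_of_lt m.lt_succ_self, hf, zero_mul, add_zero]
  rw [htop, ← sum_sub_distrib, hdivisors, sum_filter]
  refine sum_congr rfl fun k _ => ?_
  by_cases hk : k ∣ m + 1
  · rw [if_pos hk, Nat.succ_div_of_dvd hk, Nat.add_sub_cancel]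
    ring
  · rw [if_neg hk, Nat.succ_div_of_not_dvd hk, sub_self]

theorem Nat.eq_iff_log_cast_eq {a b : ℕ} (ha : 0 < a) (hb : 0 < b) :
    a = b ↔ Real.log a = Real.log b := by
  rw [← Nat.cast_inj (R := ℝ)]
  exact (Real.log_injOn_pos.eq_iff (Set.mem_Ioi.2 (by exact_mod_cast ha))
    (Set.mem_Ioi.2 (by exact_mod_cast hb))).symm

def genFactorial (α β : ℕ → ℕ) (n : ℕ) : ℕ :=
  ∏ k ∈ Icc 1 n, β k ^ α (n / k)

section GenFactorial

variable {α β : ℕ → ℕ}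

theorem genFactorial_pos (hβ : ∀ n, 1 ≤ n → 1 ≤ β n) (n : ℕ) : 0 < genFactorial α β n :=
  prod_pos fun k hk => pow_pos (hβ k (mem_Icc.1 hk).1) _

theorem log_genFactorial (hβ : ∀ n, 1 ≤ n → 1 ≤ β n) (n : ℕ) :
    Real.log (genFactorial α β n) = ∑ k ∈ Icc 1 n, (α (n / k) : ℝ) * Real.log (β k) := by
  rw [genFactorial, Nat.cast_prod, Real.log_prod fun k hk => by
    have := hβ k (mem_Icc.1 hk).1
    positivity]
  simp only [Nat.cast_pow, Real.log_pow]

theorem log_genFactorial_sub_pred (hβ : ∀ n, 1 ≤ n → 1 ≤ β n) (hα0 : α 0 = 0) {n : ℕ}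
    (hn : 1 ≤ n) :
    Real.log (genFactorial α β n) - Real.log (genFactorial α β (n - 1)) =
      ∑ d ∈ n.divisors, (((α (n / d) : ℤ) - (α (n / d - 1) : ℤ) : ℤ) : ℝ) * Real.log (β d) := by
  obtain ⟨m, rfl⟩ := Nat.exists_eq_add_of_le' hn
  rw [log_genFactorial hβ, log_genFactorial hβ, Nat.add_sub_cancel]
  push_cast
  exact sum_Icc_div_mul_succ_sub (fun k => (α k : ℝ)) _ (by simp [hα0]) m

end GenFactorial

theorem stmt_13 (α β x y : ℕ → ℕ)
    (hβ : ∀ n, 1 ≤ n → 1 ≤ β n) (hy : ∀ n, 1 ≤ n → 1 ≤ y n)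
    (hα0 : α 0 = 0) (hx0 : x 0 = 0) :
    (∀ n, 1 ≤ n →
        ∏ k ∈ Finset.Icc 1 n, β k ^ α (n / k) =
          ∏ k ∈ Finset.Icc 1 n, y k ^ x (n / k)) ↔
      (∀ n, 1 ≤ n →
        ∑ d ∈ n.divisors, (((α (n / d) : ℤ) - (α (n / d - 1) : ℤ) : ℤ) : ℝ) *
            Real.log (β d) =
          ∑ d ∈ n.divisors, (((x (n / d) : ℤ) - (x (n / d - 1) : ℤ) : ℤ) : ℝ) *
            Real.log (y d)) := by
  change (∀ n, 1 ≤ n → genFactorial α β n = genFactorial x y n) ↔ _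
  calc (∀ n, 1 ≤ n → genFactorial α β n = genFactorial x y n)
      ↔ ∀ n, 1 ≤ n → Real.log (genFactorial α β n) = Real.log (genFactorial x y n) :=
        forall₂_congr fun n _ =>
          Nat.eq_iff_log_cast_eq (genFactorial_pos hβ n) (genFactorial_pos hy n)
    _ ↔ _ := forall_pos_eq_iff_forall_pos_sub_pred_eq (by simp [genFactorial])
    _ ↔ _ := forall₂_congr fun n hn => by
        rw [log_genFactorial_sub_pred hβ hα0 hn, log_genFactorial_sub_pred hy hx0 hn]
end

section
/- Let α : ℕ → ℕ be nondecreasing with α(0) = 0, and let β : ℕ → ℕ satisfy β(n) ≥ 1 for all n ≥ 1. Then for every n ≥ 1, ∏_{k=1}^{n} β(k)^{α(⌊n/k⌋)} = (∏_{k=1}^{n−1} β(k)^{α(⌊(n−1)/k⌋)}) · ∏_{d ∣ n} β(d)^{α(n/d) − α(n/d − 1)}, where the last product runs over the positive divisors d of n. Equivalently, if n!_E denotes the factorial generated by (α, β), then n!_E/(n−1)!_E = ∏_{d ∣ n} β(d)^{α(n/d) − α(n/d − 1)}. -/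
/-!
Passing from `n` to `n + 1` changes `⌊n / k⌋` only when `k ∣ n + 1`, and then by exactly one.
Monotonicity of `α` splits each factor `β k ^ α ((n + 1) / k)` as
`β k ^ α (n / k) * β k ^ (α ((n + 1) / k) - α (n / k))`; the first factors make up `n!_E`
(the extra factor at `k = n + 1` is `β (n + 1) ^ α 0 = 1`), and in the second product only
the divisors of `n + 1` contribute.
-/

open Finset

lemma Nat.div_eq_succ_div_sub_one_of_dvd {m d : ℕ} (h : d ∣ m + 1) : m / d = (m + 1) / d - 1 := by
  rw [Nat.succ_div, if_pos h, Nat.add_sub_cancel]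

lemma Nat.divisors_subset_Icc (n : ℕ) : n.divisors ⊆ Icc 1 n := fun _ hd =>
  mem_Icc.mpr ⟨Nat.pos_of_mem_divisors hd, Nat.divisor_le hd⟩

section GeneratedFactorial

variable {M : Type*} [CommMonoid M] (α : ℕ → ℕ) (β : ℕ → M)

def generatedFactorial (n : ℕ) : M :=
  ∏ k ∈ Icc 1 n, β k ^ α (n / k)

lemma prod_Icc_pow_succ_div_sub_div (m : ℕ) :
    ∏ k ∈ Icc 1 (m + 1), β k ^ (α ((m + 1) / k) - α (m / k)) =
      ∏ d ∈ (m + 1).divisors, β d ^ (α ((m + 1) / d) - α ((m + 1) / d - 1)) := by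
  symm
  refine prod_subset_one_on_sdiff (Nat.divisors_subset_Icc _) ?_ ?_
  · intro k hk
    have hndvd : ¬ k ∣ m + 1 := fun h => (mem_sdiff.mp hk).2 (Nat.mem_divisors.mpr ⟨h, m.succ_ne_zero⟩)
    rw [Nat.succ_div_of_not_dvd hndvd, Nat.sub_self, pow_zero]
  · intro d hd
    rw [Nat.div_eq_succ_div_sub_one_of_dvd (Nat.dvd_of_mem_divisors hd)]

variable {α}

lemma prod_Icc_succ_pow_div_eq_generatedFactorial (hα0 : α 0 = 0) (m : ℕ) :
    ∏ k ∈ Icc 1 (m + 1), β k ^ α (m / k) = generatedFactorial α β m := by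
  rw [prod_Icc_succ_top (by omega), Nat.div_eq_of_lt m.lt_succ_self, hα0, pow_zero, mul_one,
    generatedFactorial]

theorem generatedFactorial_succ (hmono : Monotone α) (hα0 : α 0 = 0) (m : ℕ) :
    generatedFactorial α β (m + 1) =
      generatedFactorial α β m *
        ∏ d ∈ (m + 1).divisors, β d ^ (α ((m + 1) / d) - α ((m + 1) / d - 1)) := by
  have hsplit : ∀ k, β k ^ α ((m + 1) / k) =
      β k ^ α (m / k) * β k ^ (α ((m + 1) / k) - α (m / k)) := fun k =>
    (pow_mul_pow_sub _ (hmono (Nat.div_le_div_right m.le_succ))).symm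
  rw [generatedFactorial, prod_congr rfl fun k _ => hsplit k, prod_mul_distrib,
    prod_Icc_succ_pow_div_eq_generatedFactorial β hα0, prod_Icc_pow_succ_div_sub_div]

end GeneratedFactorial

theorem stmt_15_general (α β : ℕ → ℕ) (hmono : Monotone α) (hα0 : α 0 = 0) :
    ∀ n, 1 ≤ n →
      ∏ k ∈ Finset.Icc 1 n, β k ^ α (n / k) =
        (∏ k ∈ Finset.Icc 1 (n - 1), β k ^ α ((n - 1) / k)) *
          ∏ d ∈ n.divisors, β d ^ (α (n / d) - α (n / d - 1)) := by
  intro n hn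
  obtain ⟨m, rfl⟩ := Nat.exists_eq_add_of_le' hn
  rw [Nat.add_sub_cancel]
  exact generatedFactorial_succ β hmono hα0 m

theorem stmt_15 (α β : ℕ → ℕ) (hmono : Monotone α) (hα0 : α 0 = 0)
    (hβ : ∀ n, 1 ≤ n → 1 ≤ β n) :
    ∀ n, 1 ≤ n →
      ∏ k ∈ Finset.Icc 1 n, β k ^ α (n / k) =
        (∏ k ∈ Finset.Icc 1 (n - 1), β k ^ α ((n - 1) / k)) *
          ∏ d ∈ n.divisors, β d ^ (α (n / d) - α (n / d - 1)) :=
  stmt_15_general α β hmono hα0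
end
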